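/- Gibbs–de Finetti lower bound: for every Borel probability measure μ on Ω and every N ≥ n, p(N) ≥ g(μ) := S₁(μ) − Φ(μ), where S₁(μ) is the relative entropy of μ with respect to α (sign convention S₁(μ) = −∫(dμ/dα)log(dμ/dα)dα) and Φ(μ) = μ^{⊗n}(φ). -/

import Mathlib

open MeasureTheory Filter
open scoped ENNReal Classical

/-- `e^{-x}` for `x : EReal`, with values in `ℝ≥0∞` (so `e^{-⊤} = 0`, `e^{-⊥} = ∞`). -/
noncomputable def expNeg (x : EReal) : ℝ≥0∞ :=
  if x = ⊤ then 0 else if x = ⊥ then ⊤ else ENNReal.ofReal (Real.exp (-x.toReal))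

/-!
Gibbs' variational principle: for every probability measure `ν ≪ β`,
`log ∫ e^{-H} dβ ≥ -∫ H dν - KL(ν ‖ β)`, which is Jensen's inequality for `exp` applied to
`-H - log (dν/dβ)` under `ν`. Take `β = α^{⊗N}` and `ν = μ^{⊗N}`. The divergence of product
measures is additive, so `KL(μ^{⊗N} ‖ α^{⊗N}) = N · KL(μ ‖ α) = -N S₁(μ)`, and since every
strictly monotone `j : Fin n → Fin N` pushes `μ^{⊗N}` forward to `μ^{⊗n}`, the mean energy of the
Hamiltonian is `N / C(N, n) · C(N, n) · Φ(μ) = N Φ(μ)`. Dividing by `N` gives the bound.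
-/

open Real Finset ProbabilityTheory

lemma EReal.coe_finsetSum {ι : Type*} (s : Finset ι) (f : ι → ℝ) :
    ((∑ i ∈ s, f i : ℝ) : EReal) = ∑ i ∈ s, (f i : EReal) :=
  map_sum (⟨⟨((↑) : ℝ → EReal), EReal.coe_zero⟩, EReal.coe_add⟩ : ℝ →+ EReal) f s

lemma measurable_expNeg : Measurable expNeg :=
  Measurable.ite (measurableSet_singleton ⊤) measurable_const <|
    Measurable.ite (measurableSet_singleton ⊥) measurable_const <| by fun_prop

lemma expNeg_of_ne_top_of_ne_bot {x : EReal} (htop : x ≠ ⊤) (hbot : x ≠ ⊥) :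
    expNeg x = ENNReal.ofReal (exp (-x.toReal)) := by
  rw [expNeg, if_neg htop, if_neg hbot]

lemma expNeg_le_of_coe_le {a : ℝ} {x : EReal} (h : (a : EReal) ≤ x) :
    expNeg x ≤ ENNReal.ofReal (exp (-a)) := by
  by_cases htop : x = ⊤
  · simp [expNeg, htop]
  rw [expNeg_of_ne_top_of_ne_bot htop (ne_bot_of_le_ne_bot (EReal.coe_ne_bot a) h)]
  refine ENNReal.ofReal_le_ofReal (exp_le_exp.2 (neg_le_neg ?_))
  simpa using EReal.toReal_le_toReal h (EReal.coe_ne_bot a) htop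

theorem neg_integral_sub_integral_llr_le_log_lintegral_expNeg {X : Type*} [MeasurableSpace X]
    {ν β : Measure X} [IsProbabilityMeasure ν] [SigmaFinite β] (hνβ : ν ≪ β) {H : X → EReal}
    (hH : Measurable H) (hH_top : ∀ᵐ x ∂ν, H x ≠ ⊤) (hH_bot : ∀ᵐ x ∂ν, H x ≠ ⊥)
    (hH_int : Integrable (fun x => (H x).toReal) ν) (hllr : Integrable (llr ν β) ν)
    (hZ : ∫⁻ x, expNeg (H x) ∂β ≠ ∞) :
    -∫ x, (H x).toReal ∂ν - ∫ x, llr ν β x ∂ν ≤ log (∫⁻ x, expNeg (H x) ∂β).toReal := by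
  set g : X → ℝ := fun x => -(H x).toReal - llr ν β x
  have hg_meas : Measurable g := (measurable_ereal_toReal.comp hH).neg.sub (measurable_llr _ _)
  have hexp_eq : ∀ᵐ x ∂ν, ENNReal.ofReal (exp (g x)) = (ν.rnDeriv β x)⁻¹ * expNeg (H x) := by
    filter_upwards [hH_top, hH_bot, Measure.rnDeriv_pos hνβ,
      hνβ.ae_le (Measure.rnDeriv_lt_top ν β)] with x htop hbot hpos hlt
    have hpos' : 0 < (ν.rnDeriv β x).toReal := ENNReal.toReal_pos hpos.ne' hlt.ne
    rw [expNeg_of_ne_top_of_ne_bot htop hbot, show g x = -(H x).toReal + -llr ν β x by ring,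
      exp_add, ENNReal.ofReal_mul (exp_nonneg _), mul_comm, llr_def, exp_neg, exp_log hpos',
      ENNReal.ofReal_inv_of_pos hpos', ENNReal.ofReal_toReal hlt.ne]
  have hle : ∫⁻ x, ENNReal.ofReal (exp (g x)) ∂ν ≤ ∫⁻ x, expNeg (H x) ∂β :=
    calc ∫⁻ x, ENNReal.ofReal (exp (g x)) ∂ν
        = ∫⁻ x, (ν.rnDeriv β x)⁻¹ * expNeg (H x) ∂ν := lintegral_congr_ae hexp_eq
      _ = ∫⁻ x, ν.rnDeriv β x * ((ν.rnDeriv β x)⁻¹ * expNeg (H x)) ∂β :=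
        (lintegral_rnDeriv_mul hνβ ((Measure.measurable_rnDeriv ν β).inv.mul
          (measurable_expNeg.comp hH)).aemeasurable).symm
      _ ≤ ∫⁻ x, expNeg (H x) ∂β := lintegral_mono fun x => by
        rw [← mul_assoc]
        exact mul_le_of_le_one_left' (ENNReal.mul_inv_le_one _)
  have hexp_nonneg : 0 ≤ᵐ[ν] fun x => exp (g x) := ae_of_all _ fun x => (exp_pos _).le
  have hexp_int : Integrable (fun x => exp (g x)) ν :=
    ⟨(measurable_exp.comp hg_meas).aestronglyMeasurable,
      (hasFiniteIntegral_iff_ofReal hexp_nonneg).2 (hle.trans_lt hZ.lt_top)⟩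
  have hjensen : exp (∫ x, g x ∂ν) ≤ ∫ x, exp (g x) ∂ν :=
    convexOn_exp.map_integral_le continuous_exp.continuousOn isClosed_univ
      (ae_of_all _ fun _ => Set.mem_univ _) (hH_int.neg.sub hllr) hexp_int
  have hexp_le : exp (∫ x, g x ∂ν) ≤ (∫⁻ x, expNeg (H x) ∂β).toReal := by
    refine hjensen.trans ?_
    rw [integral_eq_lintegral_of_nonneg_ae hexp_nonneg hexp_int.aestronglyMeasurable]
    exact ENNReal.toReal_mono hZ hle
  have hg_int : ∫ x, g x ∂ν = -∫ x, (H x).toReal ∂ν - ∫ x, llr ν β x ∂ν := by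
    rw [integral_sub (f := fun x => -(H x).toReal) hH_int.neg hllr, integral_neg]
  rwa [le_log_iff_exp_le ((exp_pos _).trans_le hexp_le), ← hg_int]

lemma measurePreserving_comp_of_injective {ι κ X : Type*} [Fintype ι] [Fintype κ]
    [MeasurableSpace X] (μ : Measure X) [IsProbabilityMeasure μ] {j : κ → ι} (hj : j.Injective) :
    MeasurePreserving (fun x : ι → X => x ∘ j) (Measure.pi fun _ => μ)
      (Measure.pi fun _ => μ) := by
  refine ⟨measurable_pi_lambda _ fun k => measurable_pi_apply (j k), ?_⟩
  have hindep : iIndepFun (fun k (x : ι → X) => x (j k)) (Measure.pi fun _ => μ) :=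
    (iIndepFun_pi (μ := fun _ : ι => μ) (X := fun _ => id) fun _ => aemeasurable_id).precomp hj
  simpa only [(measurePreserving_eval _ _).map_eq, Function.comp_def] using
    (iIndepFun_iff_map_fun_eq_pi_map fun k => (measurable_pi_apply (j k)).aemeasurable).1 hindep

section Pi

variable {ι : Type*} [Fintype ι] {X : ι → Type*} [∀ i, MeasurableSpace (X i)]
  {μ α : ∀ i, Measure (X i)} [∀ i, IsProbabilityMeasure (α i)]

lemma pi_eq_withDensity_prod_rnDeriv [∀ i, SigmaFinite (μ i)] (hμα : ∀ i, μ i ≪ α i) :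
    Measure.pi μ = (Measure.pi α).withDensity fun x => ∏ i, (μ i).rnDeriv (α i) (x i) := by
  refine Measure.pi_eq fun s hs => ?_
  have hbox : (Set.univ.pi s).indicator (fun x => ∏ i, (μ i).rnDeriv (α i) (x i))
      = fun x => ∏ i, (s i).indicator ((μ i).rnDeriv (α i)) (x i) := by
    ext x
    simp [Set.indicator, Finset.prod_ite_zero]
  have hmeas (i : ι) : Measurable ((s i).indicator ((μ i).rnDeriv (α i))) :=
    (Measure.measurable_rnDeriv _ _).indicator (hs i)
  rw [withDensity_apply _ (MeasurableSet.univ_pi hs), ← lintegral_indicator (.univ_pi hs), hbox,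
    lintegral_prod_eq_prod_lintegral_of_indepFun _ _
      (iIndepFun_pi fun i => (hmeas i).aemeasurable)
      fun i => (hmeas i).comp (measurable_pi_apply i)]
  refine Finset.prod_congr rfl fun i _ => ?_
  rw [(measurePreserving_eval α i).lintegral_comp (hmeas i), lintegral_indicator (hs i),
    Measure.setLIntegral_rnDeriv (hμα i)]

lemma pi_absolutelyContinuous_pi [∀ i, SigmaFinite (μ i)] (hμα : ∀ i, μ i ≪ α i) : Measure.pi μ ≪ Measure.pi α := by
  rw [pi_eq_withDensity_prod_rnDeriv hμα]
  exact withDensity_absolutelyContinuous _ _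

variable [∀ i, IsProbabilityMeasure (μ i)]

lemma llr_pi_ae_eq (hμα : ∀ i, μ i ≪ α i) :
    llr (Measure.pi μ) (Measure.pi α) =ᵐ[Measure.pi μ] fun x => ∑ i, llr (μ i) (α i) (x i) := by
  have hrn : (Measure.pi μ).rnDeriv (Measure.pi α)
      =ᵐ[Measure.pi μ] fun x => ∏ i, (μ i).rnDeriv (α i) (x i) := by
    have hD : Measurable fun x : ∀ i, X i => ∏ i, (μ i).rnDeriv (α i) (x i) :=
      Finset.measurable_prod _ fun i _ =>
        (Measure.measurable_rnDeriv _ _).comp (measurable_pi_apply i)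
    have := Measure.rnDeriv_withDensity (Measure.pi α) hD
    rw [← pi_eq_withDensity_prod_rnDeriv hμα] at this
    exact (pi_absolutelyContinuous_pi hμα).ae_le this
  have hfactor : ∀ᵐ x ∂Measure.pi μ, ∀ i, ((μ i).rnDeriv (α i) (x i)).toReal ≠ 0 :=
    ae_all_iff.2 fun i => (measurePreserving_eval μ i).quasiMeasurePreserving.ae
      (p := fun y => ((μ i).rnDeriv (α i) y).toReal ≠ 0) <| by
      filter_upwards [Measure.rnDeriv_pos (hμα i),
        (hμα i).ae_le (Measure.rnDeriv_lt_top (μ i) (α i))] with y hpos hlt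
      exact ENNReal.toReal_ne_zero.2 ⟨hpos.ne', hlt.ne⟩
  filter_upwards [hrn, hfactor] with x hx hx0
  simp only [llr_def, hx, ENNReal.toReal_prod]
  exact Real.log_prod fun i _ => hx0 i

lemma integrable_llr_pi (hμα : ∀ i, μ i ≪ α i) (hint : ∀ i, Integrable (llr (μ i) (α i)) (μ i)) :
    Integrable (llr (Measure.pi μ) (Measure.pi α)) (Measure.pi μ) :=
  (integrable_finsetSum _ fun i _ => integrable_comp_eval (hint i)).congr
    (llr_pi_ae_eq hμα).symm

lemma integral_llr_pi (hμα : ∀ i, μ i ≪ α i) (hint : ∀ i, Integrable (llr (μ i) (α i)) (μ i)) :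
    ∫ x, llr (Measure.pi μ) (Measure.pi α) x ∂Measure.pi μ
      = ∑ i, ∫ y, llr (μ i) (α i) y ∂μ i := by
  rw [integral_congr_ae (llr_pi_ae_eq hμα),
    integral_finsetSum _ fun i _ => integrable_comp_eval (hint i)]
  exact Finset.sum_congr rfl fun i _ => integral_comp_eval (hint i).aestronglyMeasurable

end Pi

section Entropy

variable {Ω : Type*} [MeasurableSpace Ω] {μ α : Measure Ω} [SigmaFinite μ] [SigmaFinite α]

lemma integrable_llr_of_integrable_negMulLog (hμα : μ ≪ α)
    (h : Integrable (fun x => negMulLog (μ.rnDeriv α x).toReal) α) :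
    Integrable (llr μ α) μ :=
  (integrable_rnDeriv_mul_log_iff hμα).1 <| by simpa [negMulLog] using h.neg

lemma integral_negMulLog_rnDeriv (hμα : μ ≪ α) :
    ∫ x, negMulLog (μ.rnDeriv α x).toReal ∂α = -∫ x, llr μ α x ∂μ := by
  rw [← integral_rnDeriv_mul_log hμα, ← integral_neg]
  simp [negMulLog]

end Entropy

lemma card_filter_strictMono (I : Type*) [LinearOrder I] [Fintype I] (n : ℕ) :
    #{j : Fin n → I | StrictMono j} = (Fintype.card I).choose n := by
  let e : {j : Fin n → I // StrictMono j} ≃ (Fin n ↪o I) :=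
    { toFun := fun j => OrderEmbedding.ofStrictMono j.1 j.2
      invFun := fun e => ⟨e, e.strictMono⟩
      left_inv := fun _ => rfl
      right_inv := fun _ => rfl }
  rw [← Fintype.card_subtype, ← Nat.card_eq_fintype_card, Nat.card_congr
    (e.trans Set.powersetCard.ofFinEmbEquiv), Set.powersetCard.card, Nat.card_eq_fintype_card]

section MeanField

variable {Ω : Type*} {n N : ℕ} {φ : (Fin n → Ω) → EReal}

noncomputable def meanFieldHamiltonian (φ : (Fin n → Ω) → EReal) (N : ℕ) (x : Fin N → Ω) :
    EReal :=
  (((N : ℝ) / (N.choose n : ℝ) : ℝ) : EReal) *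
    ∑ j : Fin n → Fin N, if StrictMono j then φ (x ∘ j) else 0

lemma measurable_meanFieldHamiltonian [MeasurableSpace Ω] (hφ : Measurable φ) :
    Measurable (meanFieldHamiltonian φ N) := by
  refine (Finset.measurable_sum _ fun j _ => ?_).const_mul _
  split_ifs
  · exact hφ.comp (measurable_pi_lambda _ fun k => measurable_pi_apply (j k))
  · exact measurable_const

lemma coe_le_meanFieldHamiltonian {c : ℝ} (hc : ∀ y, (c : EReal) ≤ φ y) (hnN : n ≤ N)
    (x : Fin N → Ω) : ((N * c : ℝ) : EReal) ≤ meanFieldHamiltonian φ N x := by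
  have hK : (0 : ℝ) < N.choose n := by exact_mod_cast Nat.choose_pos hnN
  have hsum : ((N.choose n * c : ℝ) : EReal)
      ≤ ∑ j : Fin n → Fin N, if StrictMono j then φ (x ∘ j) else 0 :=
    calc ((N.choose n * c : ℝ) : EReal)
        = ∑ j : Fin n → Fin N, if StrictMono j then (c : EReal) else 0 := by
          rw [← Finset.sum_filter, Finset.sum_const, card_filter_strictMono, Fintype.card_fin,
            ← nsmul_eq_mul, EReal.coe_nsmul]
      _ ≤ _ := Finset.sum_le_sum fun j _ => by split_ifs; exacts [hc _, le_rfl]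
  calc ((N * c : ℝ) : EReal)
      = (((N : ℝ) / N.choose n : ℝ) : EReal) * ((N.choose n * c : ℝ) : EReal) := by
        rw [← EReal.coe_mul]; congr 1; field_simp
    _ ≤ meanFieldHamiltonian φ N x :=
        mul_le_mul_of_nonneg_left hsum (EReal.coe_nonneg.2 (by positivity))

variable [MeasurableSpace Ω] (μ : Measure Ω) [IsProbabilityMeasure μ]

lemma meanFieldHamiltonian_ae_eq_coe (hφ_bot : ∀ y, φ y ≠ ⊥)
    (hφ_top : (Measure.pi fun _ : Fin n => μ) {y | φ y = ⊤} = 0) :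
    ∀ᵐ x ∂(Measure.pi fun _ : Fin N => μ), meanFieldHamiltonian φ N x =
      (((N : ℝ) / N.choose n * ∑ j : Fin n → Fin N,
        if StrictMono j then (φ (x ∘ j)).toReal else 0 : ℝ) : EReal) := by
  have hfinite : ∀ᵐ x ∂(Measure.pi fun _ : Fin N => μ),
      ∀ j : Fin n → Fin N, StrictMono j → φ (x ∘ j) ≠ ⊤ := by
    refine ae_all_iff.2 fun j => ?_
    by_cases hj : StrictMono j
    · filter_upwards [(measurePreserving_comp_of_injective μ hj.injective).quasiMeasurePreserving.ae
        (p := fun y => φ y ≠ ⊤) (ae_iff.2 (by simpa using hφ_top))] with x hx _ using hx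
    · exact ae_of_all _ fun _ hj' => absurd hj' hj
  filter_upwards [hfinite] with x hx
  rw [EReal.coe_mul, EReal.coe_finsetSum, meanFieldHamiltonian]
  congr 1
  refine Finset.sum_congr rfl fun j _ => ?_
  split_ifs with hj
  · exact (EReal.coe_toReal (hx j hj) (hφ_bot _)).symm
  · rfl

lemma integrable_sum_strictMono_comp {f : (Fin n → Ω) → ℝ}
    (hf : Integrable f (Measure.pi fun _ => μ)) :
    Integrable (fun x : Fin N → Ω => ∑ j : Fin n → Fin N, if StrictMono j then f (x ∘ j) else 0)
      (Measure.pi fun _ => μ) := by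
  simp_rw [← Finset.sum_filter]
  exact integrable_finsetSum _ fun j hj =>
    (measurePreserving_comp_of_injective μ (Finset.mem_filter.1 hj).2.injective
      ).integrable_comp_of_integrable hf

lemma integral_sum_strictMono_comp {f : (Fin n → Ω) → ℝ}
    (hf : Integrable f (Measure.pi fun _ => μ)) :
    ∫ x : Fin N → Ω, (∑ j : Fin n → Fin N, if StrictMono j then f (x ∘ j) else 0)
      ∂(Measure.pi fun _ => μ) = N.choose n * ∫ y, f y ∂(Measure.pi fun _ => μ) := by
  have hcomp (j : Fin n → Fin N) (hj : j ∈ ({j | StrictMono j} : Finset _)) :=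
    measurePreserving_comp_of_injective μ (X := Ω) (Finset.mem_filter.1 hj).2.injective
  have hint (j : Fin n → Fin N) (hj : j ∈ ({j | StrictMono j} : Finset _)) :
      Integrable (fun x : Fin N → Ω => f (x ∘ j)) (Measure.pi fun _ => μ) :=
    (hcomp j hj).integrable_comp_of_integrable hf
  simp_rw [← Finset.sum_filter]
  rw [integral_finsetSum _ hint, Finset.sum_congr rfl fun j hj => ?_, Finset.sum_const,
    card_filter_strictMono, Fintype.card_fin, nsmul_eq_mul]
  rw [← (hcomp j hj).map_eq] at hf ⊢
  exact (integral_map (hcomp j hj).measurable.aemeasurable hf.aestronglyMeasurable).symm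

lemma integrable_toReal_meanFieldHamiltonian (hφ_bot : ∀ y, φ y ≠ ⊥)
    (hφ_top : (Measure.pi fun _ : Fin n => μ) {y | φ y = ⊤} = 0)
    (hφ_int : Integrable (fun y => (φ y).toReal) (Measure.pi fun _ : Fin n => μ)) :
    Integrable (fun x => (meanFieldHamiltonian φ N x).toReal) (Measure.pi fun _ => μ) :=
  ((integrable_sum_strictMono_comp μ hφ_int).const_mul _).congr <| by
    filter_upwards [meanFieldHamiltonian_ae_eq_coe μ hφ_bot hφ_top] with x hx
    rw [hx, EReal.toReal_coe]

lemma integral_toReal_meanFieldHamiltonian (hnN : n ≤ N) (hφ_bot : ∀ y, φ y ≠ ⊥)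
    (hφ_top : (Measure.pi fun _ : Fin n => μ) {y | φ y = ⊤} = 0)
    (hφ_int : Integrable (fun y => (φ y).toReal) (Measure.pi fun _ : Fin n => μ)) :
    ∫ x, (meanFieldHamiltonian φ N x).toReal ∂(Measure.pi fun _ => μ)
      = N * ∫ y, (φ y).toReal ∂(Measure.pi fun _ => μ) := by
  have hK : (N.choose n : ℝ) ≠ 0 := by exact_mod_cast (Nat.choose_pos hnN).ne'
  rw [integral_congr_ae <| (meanFieldHamiltonian_ae_eq_coe μ hφ_bot hφ_top).mono
      fun x hx => by rw [hx, EReal.toReal_coe],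
    integral_const_mul, integral_sum_strictMono_comp μ hφ_int]
  field_simp

end MeanField

theorem gibbs_deFinetti_lower_bound_general
    {Ω : Type*} [MeasurableSpace Ω]
    (α : Measure Ω) [IsProbabilityMeasure α] (n : ℕ) (hn : 1 ≤ n)
    (φ : (Fin n → Ω) → EReal) (hmeas : Measurable φ)
    (c : ℝ) (hlb : ∀ y, (c : EReal) ≤ φ y)
    (p : ℕ → ℝ)
    (hp : ∀ N : ℕ, p N = (N : ℝ)⁻¹ * Real.log ((∫⁻ x : Fin N → Ω,
        expNeg ((((N : ℝ) / (N.choose n : ℝ) : ℝ) : EReal) *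
          ∑ j : Fin n → Fin N, (if StrictMono j then φ (x ∘ j) else 0))
        ∂(Measure.pi fun (_ : Fin N) => α)).toReal))
    (μ : Measure Ω) [IsProbabilityMeasure μ] (hacμ : μ ≪ α)
    (hSint : Integrable (fun x => Real.negMulLog ((μ.rnDeriv α x).toReal)) α)
    (hΦfin : (Measure.pi fun _ : Fin n => μ) {y | φ y = ⊤} = 0)
    (hΦint : Integrable (fun y => (φ y).toReal) (Measure.pi fun _ : Fin n => μ)) :
    ∀ N : ℕ, n ≤ N →
      (∫ x, Real.negMulLog ((μ.rnDeriv α x).toReal) ∂α)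
        - (∫ y, (φ y).toReal ∂(Measure.pi fun _ : Fin n => μ)) ≤ p N := by
  intro N hN
  have hN_pos : (0 : ℝ) < N := by exact_mod_cast hn.trans hN
  have hφ_bot (y : Fin n → Ω) : φ y ≠ ⊥ := ne_bot_of_le_ne_bot (EReal.coe_ne_bot c) (hlb y)
  have hH_bot (x : Fin N → Ω) : meanFieldHamiltonian φ N x ≠ ⊥ :=
    ne_bot_of_le_ne_bot (EReal.coe_ne_bot _) (coe_le_meanFieldHamiltonian hlb hN x)
  have hZ : ∫⁻ x, expNeg (meanFieldHamiltonian φ N x) ∂(Measure.pi fun _ => α) ≠ ∞ :=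
    ((lintegral_mono fun x => expNeg_le_of_coe_le (coe_le_meanFieldHamiltonian hlb hN x)).trans_lt
      (lintegral_const_lt_top ENNReal.ofReal_ne_top)).ne
  have hllr : Integrable (llr μ α) μ := integrable_llr_of_integrable_negMulLog hacμ hSint
  have hgibbs := neg_integral_sub_integral_llr_le_log_lintegral_expNeg
    (pi_absolutelyContinuous_pi fun _ => hacμ) (measurable_meanFieldHamiltonian hmeas)
    ((meanFieldHamiltonian_ae_eq_coe μ hφ_bot hΦfin).mono fun x hx => hx ▸ EReal.coe_ne_top _)
    (ae_of_all _ hH_bot) (integrable_toReal_meanFieldHamiltonian μ hφ_bot hΦfin hΦint)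
    (integrable_llr_pi (fun _ => hacμ) fun _ => hllr) hZ
  rw [integral_toReal_meanFieldHamiltonian μ hN hφ_bot hΦfin hΦint,
    integral_llr_pi (fun _ => hacμ) fun _ => hllr, Finset.sum_const, Finset.card_univ,
    Fintype.card_fin, nsmul_eq_mul] at hgibbs
  rw [hp N, integral_negMulLog_rnDeriv hacμ, le_inv_mul_iff₀ hN_pos]
  calc _ = -(N * ∫ y, (φ y).toReal ∂(Measure.pi fun _ => μ)) - N * ∫ x, llr μ α x ∂μ := by ring
    _ ≤ _ := hgibbs

/-- (Gibbs–de Finetti lower bound.) For every probability measure `μ ≪ α`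
(with finite entropy and `Φ(μ) = μ^{⊗n}(φ)` finite) and every `N ≥ n`,
`p(N) ≥ g(μ) = S₁(μ) − Φ(μ)`, where `S₁(μ) = −∫ (dμ/dα) log(dμ/dα) dα`. -/
theorem gibbs_deFinetti_lower_bound
    {Ω : Type*} [MetricSpace Ω] [CompactSpace Ω] [MeasurableSpace Ω] [BorelSpace Ω]
    (α : Measure Ω) [IsProbabilityMeasure α] (n : ℕ) (hn : 1 ≤ n)
    (φ : (Fin n → Ω) → EReal) (hmeas : Measurable φ)
    (c : ℝ) (hlb : ∀ y, (c : EReal) ≤ φ y)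
    (hsym : ∀ (σ : Equiv.Perm (Fin n)) (y : Fin n → Ω), φ (y ∘ σ) = φ y)
    (hfin : (Measure.pi fun _ : Fin n => α) {y | φ y = ⊤} = 0)
    (hint : Integrable (fun y => (φ y).toReal) (Measure.pi fun _ : Fin n => α))
    (p : ℕ → ℝ)
    (hp : ∀ N : ℕ, p N = (N : ℝ)⁻¹ * Real.log ((∫⁻ x : Fin N → Ω,
        expNeg ((((N : ℝ) / (N.choose n : ℝ) : ℝ) : EReal) *
          ∑ j : Fin n → Fin N, (if StrictMono j then φ (x ∘ j) else 0))
        ∂(Measure.pi fun (_ : Fin N) => α)).toReal))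
    (μ : Measure Ω) [IsProbabilityMeasure μ] (hacμ : μ ≪ α)
    (hSint : Integrable (fun x => Real.negMulLog ((μ.rnDeriv α x).toReal)) α)
    (hΦfin : (Measure.pi fun _ : Fin n => μ) {y | φ y = ⊤} = 0)
    (hΦint : Integrable (fun y => (φ y).toReal) (Measure.pi fun _ : Fin n => μ)) :
    ∀ N : ℕ, n ≤ N →
      (∫ x, Real.negMulLog ((μ.rnDeriv α x).toReal) ∂α)
        - (∫ y, (φ y).toReal ∂(Measure.pi fun _ : Fin n => μ)) ≤ p N :=
  gibbs_deFinetti_lower_bound_general α n hn φ hmeas c hlb p hp μ hacμ hSint hΦfin hΦint
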